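/- arXiv:1711.03581 — 2 statements merged into one kernel-verified Lean document; each statement's English description precedes it below -/
import Mathlib

section
/- Let (J_{ij})_{1\le i,j\le N} be i.i.d. standard Gaussian random variables and H(\eta) = N^{-1/2}\sum_{i,j=1}^N J_{ij}\eta_i\eta_j for \eta\in\{0,1\}^N. Suppose m > 0 satisfies \sup_{\alpha\in(0,1]}\big( I(\alpha) - m^2/(2\alpha^2) \big) < 0, where I(\alpha) = -\alpha\log\alpha-(1-\alpha)\log(1-\alpha) (with I(1)=0). Then there exist c > 0 and N_0 such that for all N \ge N_0, P\big( \exists\, \eta \in \{0,1\}^N : H(\eta) < -mN \big) \le e^{-cN}. -/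
/-!
A configuration `η` with support `S`, `#S = αN`, has energy `N^{-1/2}` times a sum of `(αN)²`
independent standard Gaussians, so by the Gaussian (Chernoff) tail bound
`P(H(η) < -mN) ≤ exp(-N m² / (2α²))`. There are `choose N (αN) ≤ exp(N I(α))` such
configurations, hence the union bound gives `P(∃ η, H(η) < -mN) ≤ (N + 1) exp(N s)` with
`s = sup_α (I(α) - m²/(2α²)) < 0`, and the factor `N + 1` is absorbed by half of the exponent.
-/

open MeasureTheory ProbabilityTheory Finset Real
open scoped NNReal

namespace ProbabilityTheory

lemma hasSubgaussianMGF_id_gaussianReal (v : ℝ≥0) :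
    HasSubgaussianMGF id v (gaussianReal 0 v) where
  integrable_exp_mul := integrable_exp_mul_gaussianReal
  mgf_le t := by rw [mgf_id_gaussianReal]; simp

lemma HasSubgaussianMGF.of_map_eq_gaussianReal {Ω : Type*} [MeasurableSpace Ω] {μ : Measure Ω}
    {X : Ω → ℝ} {v : ℝ≥0} (hX : AEMeasurable X μ) (h : μ.map X = gaussianReal 0 v) :
    HasSubgaussianMGF X v μ :=
  (HasSubgaussianMGF.id_map_iff hX).1 (h ▸ hasSubgaussianMGF_id_gaussianReal v)

lemma measureReal_sum_le_neg_le_of_gaussianReal {Ω ι : Type*} [MeasurableSpace Ω]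
    {μ : Measure Ω} {X : ι → Ω → ℝ} (hmeas : ∀ i, Measurable (X i)) (hind : iIndepFun X μ)
    (hmap : ∀ i, μ.map (X i) = gaussianReal 0 1) (s : Finset ι) {a : ℝ} (ha : 0 ≤ a) :
    μ.real {ω | ∑ i ∈ s, X i ω ≤ -a} ≤ exp (-a ^ 2 / (2 * #s)) := by
  have hneg : iIndepFun (fun i ω ↦ -X i ω) μ := hind.comp (fun _ x ↦ -x) fun _ ↦ measurable_neg
  have hsub (i : ι) (_ : i ∈ s) : HasSubgaussianMGF (fun ω ↦ -X i ω) 1 μ :=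
    (HasSubgaussianMGF.of_map_eq_gaussianReal (hmeas i).aemeasurable (hmap i)).neg
  have h := HasSubgaussianMGF.measure_sum_ge_le_of_iIndepFun hneg hsub ha
  convert h using 3 with ω
  · simp [sum_neg_distrib, le_neg]
  · simp

end ProbabilityTheory

namespace Nat

lemma choose_mul_pow_mul_pow_le_one {n k : ℕ} (hk : k ≤ n) {p : ℝ} (hp₀ : 0 ≤ p) (hp₁ : p ≤ 1) :
    n.choose k * p ^ k * (1 - p) ^ (n - k) ≤ 1 := by
  have hsum := add_pow p (1 - p) n
  rw [add_sub_cancel, one_pow] at hsum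
  calc (n.choose k : ℝ) * p ^ k * (1 - p) ^ (n - k)
      = p ^ k * (1 - p) ^ (n - k) * n.choose k := by ring
    _ ≤ ∑ j ∈ range (n + 1), p ^ j * (1 - p) ^ (n - j) * n.choose j :=
      single_le_sum (f := fun j ↦ p ^ j * (1 - p) ^ (n - j) * (n.choose j : ℝ))
        (fun j _ ↦ by have := sub_nonneg.2 hp₁; positivity) (mem_range.2 (lt_succ_of_le hk))
    _ = 1 := hsum.symm

lemma choose_le_exp_mul_binEntropy {n k : ℕ} (hk : k ≤ n) :
    (n.choose k : ℝ) ≤ exp (n * binEntropy (k / n)) := by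
  rcases k.eq_zero_or_pos with rfl | hk₀
  · simp
  rcases hk.eq_or_lt with rfl | hkn
  · have : (k : ℝ) ≠ 0 := by positivity
    simp [this]
  have hn : (0 : ℝ) < n := by norm_cast; omega
  set p : ℝ := k / n with hp
  have hp₀ : 0 < p := by positivity
  have hp₁ : p < 1 := by rw [hp, div_lt_one hn]; exact_mod_cast hkn
  have hq₀ : 0 < 1 - p := sub_pos.2 hp₁
  have hpos : 0 < p ^ k * (1 - p) ^ (n - k) := by positivity
  have hpow : p ^ k * (1 - p) ^ (n - k) = exp (-(n * binEntropy p)) := by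
    have hnp : (n : ℝ) * p = k := by rw [hp]; field_simp
    have hnk : ((n - k : ℕ) : ℝ) = n * (1 - p) := by push_cast [hk]; linarith
    rw [← exp_log hpos, log_mul (by positivity) (by positivity), Real.log_pow, Real.log_pow,
      hnk, ← hnp, binEntropy, Real.log_inv, Real.log_inv]
    ring_nf
  calc (n.choose k : ℝ) ≤ 1 / (p ^ k * (1 - p) ^ (n - k)) := by
        rw [le_div_iff₀ hpos, ← mul_assoc]
        exact choose_mul_pow_mul_pow_le_one hk hp₀.le hp₁.le
    _ = exp (n * binEntropy p) := by rw [hpow, one_div, ← exp_neg, neg_neg]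

end Nat

lemma sum_mul_ite_mul_ite_eq_sum_product {ι : Type*} [Fintype ι] (x : ι × ι → ℝ)
    (η : ι → Bool) :
    ∑ i, ∑ j, x (i, j) * (if η i then (1 : ℝ) else 0) * (if η j then (1 : ℝ) else 0) =
      ∑ p ∈ ({i | η i} : Finset ι) ×ˢ ({i | η i} : Finset ι), x p := by
  rw [sum_product, sum_filter]
  refine sum_congr rfl fun i _ ↦ ?_
  rw [sum_filter]
  split_ifs <;> simp [*]

lemma sum_div_choose_card (N : ℕ) (r : ℝ) :
    ∑ S : Finset (Fin N), r / N.choose #S = (N + 1) * r := by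
  rw [← powerset_univ, sum_powerset_apply_card (fun k ↦ r / N.choose k), card_univ,
    Fintype.card_fin]
  have hterm (k : ℕ) (hk : k ∈ range (N + 1)) : N.choose k • (r / N.choose k) = r := by
    have : (N.choose k : ℝ) ≠ 0 := by
      exact_mod_cast (Nat.choose_pos (Nat.lt_succ_iff.1 (mem_range.1 hk))).ne'
    rw [nsmul_eq_mul]; field_simp
  rw [sum_congr rfl hterm, sum_const, card_range, nsmul_eq_mul]
  push_cast; ring

lemma natCast_add_one_le_exp_mul {c : ℝ} (hc : 0 < c) {N : ℕ} (hN : 2 / c ^ 2 ≤ N) :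
    (N + 1 : ℝ) ≤ exp (c * N) := by
  have hcN : 2 ≤ c ^ 2 * N := by rwa [div_le_iff₀' (by positivity)] at hN
  have := quadratic_le_exp_of_nonneg (by positivity : 0 ≤ c * N)
  nlinarith

section FirstMoment

variable {Ω : Type*} [MeasurableSpace Ω] {P : Measure Ω} {N : ℕ} {J : Fin N × Fin N → Ω → ℝ}
  {m s : ℝ}

lemma measureReal_sum_product_le_exp_div_choose (hN : 0 < N) (hm : 0 < m)
    (hs : ∀ α ∈ Set.Ioc (0 : ℝ) 1, binEntropy α - m ^ 2 / (2 * α ^ 2) ≤ s)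
    (hmeas : ∀ p, Measurable (J p)) (hind : iIndepFun J P)
    (hmap : ∀ p, P.map (J p) = gaussianReal 0 1) (S : Finset (Fin N)) :
    P.real {ω | ∑ p ∈ S ×ˢ S, J p ω ≤ -(m * N * √N)} ≤ exp (N * s) / N.choose #S := by
  have hNr : (0 : ℝ) < N := by exact_mod_cast hN
  have hSN : #S ≤ N := by simpa using card_le_univ S
  have hchoose : (0 : ℝ) < N.choose #S := by exact_mod_cast Nat.choose_pos hSN
  rcases S.eq_empty_or_nonempty with rfl | hS
  · have : {ω | ∑ p ∈ (∅ : Finset (Fin N)) ×ˢ ∅, J p ω ≤ -(m * N * √N)} = ∅ := by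
      ext ω; simpa using by positivity
    rw [this, measureReal_empty]; positivity
  set α : ℝ := #S / N with hα
  have hαmem : α ∈ Set.Ioc (0 : ℝ) 1 :=
    ⟨by positivity, div_le_one_of_le₀ (by exact_mod_cast hSN) hNr.le⟩
  have hexponent : -(m * N * √N) ^ 2 / (2 * #(S ×ˢ S)) = N * -(m ^ 2 / (2 * α ^ 2)) := by
    rw [card_product, hα, mul_pow, mul_pow, sq_sqrt hNr.le]
    have : (#S : ℝ) ≠ 0 := by exact_mod_cast hS.card_pos.ne'
    push_cast; field_simp
  calc P.real {ω | ∑ p ∈ S ×ˢ S, J p ω ≤ -(m * N * √N)}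
      ≤ exp (N * -(m ^ 2 / (2 * α ^ 2))) := by
        rw [← hexponent]
        exact measureReal_sum_le_neg_le_of_gaussianReal hmeas hind hmap _ (by positivity)
    _ ≤ exp (N * s - N * binEntropy α) := by
        gcongr; rw [← mul_sub]; gcongr; linarith [hs α hαmem]
    _ ≤ exp (N * s) / N.choose #S := by
        rw [exp_sub]
        gcongr
        exact Nat.choose_le_exp_mul_binEntropy hSN

theorem measureReal_exists_energy_lt_le [IsFiniteMeasure P] (hN : 0 < N) (hm : 0 < m)
    (hs : ∀ α ∈ Set.Ioc (0 : ℝ) 1, binEntropy α - m ^ 2 / (2 * α ^ 2) ≤ s)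
    (hmeas : ∀ p, Measurable (J p)) (hind : iIndepFun J P)
    (hmap : ∀ p, P.map (J p) = gaussianReal 0 1) {H : Ω → (Fin N → Bool) → ℝ}
    (hH : ∀ ω η, H ω η = (1 / √N) * ∑ i, ∑ j, J (i, j) ω *
      (if η i then (1 : ℝ) else 0) * (if η j then (1 : ℝ) else 0)) :
    P.real {ω | ∃ η : Fin N → Bool, H ω η < -(m * N)} ≤ (N + 1) * exp (N * s) := by
  have hsqrt : 0 < √(N : ℝ) := by positivity
  have hcover : {ω | ∃ η : Fin N → Bool, H ω η < -(m * N)} ⊆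
      ⋃ S : Finset (Fin N), {ω | ∑ p ∈ S ×ˢ S, J p ω ≤ -(m * N * √N)} := by
    rintro ω ⟨η, hη⟩
    refine Set.mem_iUnion.2 ⟨({i | η i} : Finset (Fin N)), ?_⟩
    rw [hH, sum_mul_ite_mul_ite_eq_sum_product (fun p ↦ J p ω), one_div,
      inv_mul_lt_iff₀ hsqrt] at hη
    exact hη.le.trans_eq (by ring)
  calc P.real {ω | ∃ η : Fin N → Bool, H ω η < -(m * N)}
      ≤ ∑ S : Finset (Fin N), P.real {ω | ∑ p ∈ S ×ˢ S, J p ω ≤ -(m * N * √N)} :=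
        (measureReal_mono hcover).trans (measureReal_iUnion_fintype_le _)
    _ ≤ ∑ S : Finset (Fin N), exp (N * s) / N.choose #S :=
        sum_le_sum fun S _ ↦ measureReal_sum_product_le_exp_div_choose hN hm hs hmeas hind hmap S
    _ = (N + 1) * exp (N * s) := sum_div_choose_card N _

end FirstMoment

/-- First-moment bound: if `sup_{α ∈ (0,1]}(I(α) - m²/(2α²)) < 0`, then
the probability that some configuration has energy below `-mN` is exponentially small in `N`. -/
theorem no_low_energy_configs_annealed
    (m : ℝ) (hm : 0 < m)
    (I : ℝ → ℝ) (hI : ∀ α, I α = -α * Real.log α - (1 - α) * Real.log (1 - α))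
    (hsup : sSup ((fun α => I α - m ^ 2 / (2 * α ^ 2)) '' Set.Ioc (0 : ℝ) 1) < 0) :
    ∃ c : ℝ, 0 < c ∧ ∃ N₀ : ℕ, ∀ N ≥ N₀,
      ∀ (Ω : Type) (_ : MeasurableSpace Ω) (P : Measure Ω), IsProbabilityMeasure P →
      ∀ (J : Fin N × Fin N → Ω → ℝ),
        (∀ p, Measurable (J p)) →
        iIndepFun J P →
        (∀ p, Measure.map (J p) P = gaussianReal 0 1) →
        ∀ (H : Ω → (Fin N → Bool) → ℝ),
          (∀ ω η, H ω η = (1 / Real.sqrt N) * ∑ i, ∑ j, J (i, j) ω *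
              (if η i then (1 : ℝ) else 0) * (if η j then (1 : ℝ) else 0)) →
          P {ω | ∃ η : Fin N → Bool, H ω η < -(m * N)} ≤
            ENNReal.ofReal (Real.exp (-c * N)) := by
  set s := sSup ((fun α => I α - m ^ 2 / (2 * α ^ 2)) '' Set.Ioc (0 : ℝ) 1)
  have hbdd : BddAbove ((fun α => I α - m ^ 2 / (2 * α ^ 2)) '' Set.Ioc (0 : ℝ) 1) := by
    by_contra h
    exact hsup.ne (csSup_of_not_bddAbove h |>.trans Real.sSup_empty)
  have hIent : I = binEntropy := funext fun α ↦ by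
    rw [hI, binEntropy_eq_negMulLog_add_negMulLog_one_sub, negMulLog, negMulLog]; ring
  have hs (α : ℝ) (hα : α ∈ Set.Ioc (0 : ℝ) 1) : binEntropy α - m ^ 2 / (2 * α ^ 2) ≤ s :=
    hIent ▸ le_csSup hbdd ⟨α, hα, rfl⟩
  refine ⟨-s / 2, by linarith, ⌈2 / (-s / 2) ^ 2⌉₊ + 1,
    fun N hN Ω _ P _ J hmeas hind hmap H hH ↦ ?_⟩
  have hgrow : (N + 1 : ℝ) ≤ exp (-s / 2 * N) :=
    natCast_add_one_le_exp_mul (by linarith) ((Nat.le_ceil _).trans (by exact_mod_cast by omega))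
  rw [← ofReal_measureReal]
  refine ENNReal.ofReal_le_ofReal ?_
  calc P.real {ω | ∃ η : Fin N → Bool, H ω η < -(m * N)}
      ≤ (N + 1) * exp (N * s) :=
        measureReal_exists_energy_lt_le (by omega) hm hs hmeas hind hmap hH
    _ ≤ exp (-s / 2 * N) * exp (N * s) := by gcongr
    _ = exp (-(-s / 2) * N) := by rw [← exp_add]; ring_nf
end

section
/- For every \alpha \in (0,1), -\alpha\log\alpha - (1-\alpha)\log(1-\alpha) < \frac{(0.57)^2}{2\alpha^2(1-\alpha^2)}. -/
/-!
Both entropy terms are bounded by the rational majorant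
`-x log x ≤ (1 - x)(1 + 5x) / (2(x + 2))` on `(0, 1]`, obtained by two rounds of the same
monotonicity argument: a function vanishing at `1` with nonpositive derivative is nonnegative
on `(0, 1]`. The first round gives the Padé bound `log x ≤ 2(x - 1)/(x + 1)`, which in turn
controls the derivative in the second round. Summing the majorants at `α` and `1 - α` and
clearing denominators leaves a polynomial inequality with little room: the summed majorant times
`2α²(1 - α²)` peaks at about `0.3226` (near `α ≈ 0.652`), against `0.57² = 0.3249`.
-/

open Real Set

lemma le_of_hasDerivAt_nonpos_of_mem_Ioc {f f' : ℝ → ℝ} {a b x : ℝ}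
    (hf : ∀ t ∈ Ioc a b, HasDerivAt f (f' t) t) (hf' : ∀ t ∈ Ioo a b, f' t ≤ 0)
    (hx : x ∈ Ioc a b) : f b ≤ f x := by
  have hanti : AntitoneOn f (Ioc a b) := by
    refine antitoneOn_of_hasDerivWithinAt_nonpos (f' := f') (convex_Ioc a b)
      (fun t ht ↦ (hf t ht).continuousAt.continuousWithinAt) (fun t ht ↦ ?_) ?_
    · rw [interior_Ioc] at ht ⊢
      exact (hf t (Ioo_subset_Ioc_self ht)).hasDerivWithinAt
    · simpa only [interior_Ioc] using hf'
  exact hanti hx ⟨hx.1.trans_le hx.2, le_rfl⟩ hx.2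

lemma Real.log_le_two_mul_sub_one_div_add_one {x : ℝ} (hx : x ∈ Ioc 0 1) :
    log x ≤ 2 * (x - 1) / (x + 1) := by
  have hderiv : ∀ t ∈ Ioc (0 : ℝ) 1, HasDerivAt (fun t ↦ 2 * (t - 1) / (t + 1) - log t)
      (4 / (t + 1) ^ 2 - 1 / t) t := by
    intro t ht
    have ht1 : t + 1 ≠ 0 := by linarith [ht.1]
    have := ((((hasDerivAt_id' t).sub_const 1).const_mul 2).div
      ((hasDerivAt_id' t).add_const 1) ht1).sub (hasDerivAt_log ht.1.ne')
    exact this.congr_deriv (by ring)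
  have hderiv_nonpos : ∀ t ∈ Ioo (0 : ℝ) 1, 4 / (t + 1) ^ 2 - 1 / t ≤ 0 := by
    intro t ht
    rw [sub_nonpos, div_le_div_iff₀ (by nlinarith [ht.1]) ht.1]
    nlinarith [sq_nonneg (t - 1)]
  have := le_of_hasDerivAt_nonpos_of_mem_Ioc hderiv hderiv_nonpos hx
  norm_num at this
  linarith

noncomputable def negMulLogMajorant (x : ℝ) : ℝ := (1 - x) * (1 + 5 * x) / (2 * (x + 2))

lemma negMulLog_le_negMulLogMajorant {x : ℝ} (hx : x ∈ Ioc 0 1) :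
    negMulLog x ≤ negMulLogMajorant x := by
  have hderiv : ∀ t ∈ Ioc (0 : ℝ) 1,
      HasDerivAt (fun t ↦ (1 - t) * (1 + 5 * t) + 2 * t * (t + 2) * log t)
        (8 - 8 * t + (4 * t + 4) * log t) t := by
    intro t ht
    have := (((hasDerivAt_id' t).const_sub 1).mul
      (((hasDerivAt_id' t).const_mul 5).const_add 1)).add
      ((((hasDerivAt_id' t).const_mul 2).mul ((hasDerivAt_id' t).add_const 2)).mul
        (hasDerivAt_log ht.1.ne'))
    refine this.congr_deriv ?_
    simp only [Pi.mul_apply]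
    field_simp [ht.1.ne']
    ring
  have hderiv_nonpos : ∀ t ∈ Ioo (0 : ℝ) 1, 8 - 8 * t + (4 * t + 4) * log t ≤ 0 := by
    intro t ht
    have ht1 : 0 < t + 1 := by linarith [ht.1]
    have hlog := log_le_two_mul_sub_one_div_add_one (Ioo_subset_Ioc_self ht)
    calc 8 - 8 * t + (4 * t + 4) * log t
        ≤ 8 - 8 * t + (4 * t + 4) * (2 * (t - 1) / (t + 1)) := by gcongr; linarith
      _ = 0 := by field_simp; ring
  have := le_of_hasDerivAt_nonpos_of_mem_Ioc hderiv hderiv_nonpos hx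
  norm_num at this
  rw [negMulLog, negMulLogMajorant, le_div_iff₀ (by linarith [hx.1])]
  nlinarith [hx.1]

lemma negMulLogMajorant_add_one_sub_mul_lt {a : ℝ} (ha : a ∈ Ioo 0 1) :
    (negMulLogMajorant a + negMulLogMajorant (1 - a)) * (2 * a ^ 2 * (1 - a ^ 2)) < 0.57 ^ 2 := by
  obtain ⟨h0, h1⟩ := ha
  have hsum : negMulLogMajorant a + negMulLogMajorant (1 - a) =
      (3 + 23 * (a * (1 - a))) / (2 * (6 + a * (1 - a))) := by
    have h2 : a + 2 ≠ 0 := by linarith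
    have h3 : 1 - a + 2 ≠ 0 := by linarith
    have h6 : 6 + a * (1 - a) ≠ 0 := by nlinarith
    rw [negMulLogMajorant, negMulLogMajorant]
    field_simp
    ring
  rw [hsum, div_mul_eq_mul_div, div_lt_iff₀ (by nlinarith)]
  nlinarith [mul_nonneg (mul_nonneg (sq_nonneg (a - 0.652)) h0.le) h0.le,
    mul_pos h0 (sub_pos.2 h1), mul_pos (mul_pos h0 h0) (sub_pos.2 h1)]

/-- For every `α ∈ (0,1)` the binary entropy satisfies
`I(α) < (0.57)²/(2α²(1-α²))`. -/
theorem entropy_lt_conditioned_rate :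
    ∀ α ∈ Set.Ioo (0 : ℝ) 1,
      -α * Real.log α - (1 - α) * Real.log (1 - α) <
        (0.57) ^ 2 / (2 * α ^ 2 * (1 - α ^ 2)) := by
  rintro a ⟨h0, h1⟩
  have hden : 0 < 2 * a ^ 2 * (1 - a ^ 2) := by
    have : 0 < 1 - a ^ 2 := by nlinarith
    positivity
  rw [lt_div_iff₀ hden]
  calc (-a * log a - (1 - a) * log (1 - a)) * (2 * a ^ 2 * (1 - a ^ 2))
      = (negMulLog a + negMulLog (1 - a)) * (2 * a ^ 2 * (1 - a ^ 2)) := by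
        simp only [negMulLog]
        ring
    _ ≤ (negMulLogMajorant a + negMulLogMajorant (1 - a)) * (2 * a ^ 2 * (1 - a ^ 2)) := by
        gcongr
        · exact negMulLog_le_negMulLogMajorant ⟨h0, h1.le⟩
        · exact negMulLog_le_negMulLogMajorant ⟨by linarith, by linarith⟩
    _ < 0.57 ^ 2 := negMulLogMajorant_add_one_sub_mul_lt ⟨h0, h1⟩
end
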